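/- arXiv:1508.04272 — 4 statements merged into one kernel-verified Lean document; each statement's English description precedes it below -/
import Mathlib

section
/- Define Φ(3, N) = 2^N - 1, Φ(p, 1) = 1, and for p ≥ 4, N ≥ 2, Φ(p, N) = min over 1 ≤ ℓ < N of 2Φ(p, ℓ) + Φ(p-1, N-ℓ). Then for all p ≥ 3 and N ≥ 1, Φ(p, N) = Σ_{n=0}^{N-1} 2^{∇_p(n)}, where ∇_p(n) = max{k ≥ 0 : C(k+p-3, p-2) ≤ n}. -/
/-- The Frame–Stewart numbers: `Φ(3, N) = 2^N - 1`, `Φ(p, 1) = 1`, and for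
`p ≥ 4`, `N ≥ 2`, `Φ(p, N) = min_{1 ≤ ℓ < N} (2Φ(p, ℓ) + Φ(p-1, N-ℓ))`.
(Junk values for `p < 3` or `N = 0`.) -/
def Phi : ℕ → ℕ → ℕ
  | _, 0 => 0
  | 0, _ + 1 => 0
  | 1, _ + 1 => 0
  | 2, _ + 1 => 0
  | 3, N + 1 => 2 ^ (N + 1) - 1
  | _ + 4, 1 => 1
  | p + 4, N + 2 =>
    (Finset.Icc 1 (N + 1)).attach.inf'
      (by simp [Finset.attach_nonempty_iff, Finset.nonempty_Icc])
      (fun l => 2 * Phi (p + 4) l.1 + Phi (p + 3) (N + 2 - l.1))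
termination_by p N => (p, N)
decreasing_by
  · have hl := l.2
    simp only [Finset.mem_Icc] at hl
    exact Prod.Lex.right _ (by omega)
  · exact Prod.Lex.left _ _ (by omega)

/-- `Δ_p(k) := C(k+p-3, p-2)`. -/
def Delta (p k : ℕ) : ℕ := Nat.choose (k + p - 3) (p - 2)

/-- `∇_p(n) := max{k ≥ 0 : Δ_p(k) ≤ n}`. -/
def nabla (p n : ℕ) : ℕ := Nat.findGreatest (fun k => Delta p k ≤ n) n

/-!
The sequence `n ↦ 2 ^ ∇_p(n)` is nondecreasing and takes the value `2 ^ k` exactly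
`Δ_{p-1}(k+1)` times, because `Δ_p(k+1) = Δ_p(k) + Δ_{p-1}(k+1)`. Pascal's rule
`Δ_{p-1}(k+1) = Δ_{p-1}(k) + Δ_{p-2}(k+1)` then says that it is the sorted merge of
`n ↦ 2 · 2 ^ ∇_p(n)` and `n ↦ 2 ^ ∇_{p-1}(n)`. Taking `ℓ` terms of the first and `N - ℓ` of
the second costs at least the sum of the `N` smallest terms of the merge, with equality for a
suitable `ℓ`, so `N ↦ Σ_{n<N} 2 ^ ∇_p(n)` satisfies the Frame–Stewart recursion.
-/

namespace FrameStewart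

section SplitSum

variable {M : Type*} [AddCommMonoid M]

def splitSum (a b : ℕ → M) (N l : ℕ) : M :=
  ∑ i ∈ Finset.range l, a i + ∑ i ∈ Finset.range (N - l), b i

theorem splitSum_succ_add (a b : ℕ → M) {N i : ℕ} (hi : i < N) :
    splitSum a b N (i + 1) + b (N - 1 - i) = splitSum a b N i + a i := by
  obtain ⟨m, rfl⟩ : ∃ m, N = i + 1 + m := ⟨N - (i + 1), by omega⟩
  simp only [splitSum, Finset.sum_range_succ, show i + 1 + m - (i + 1) = m by omega,
    show i + 1 + m - i = m + 1 by omega, show i + 1 + m - 1 - i = m by omega]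
  abel

variable [PartialOrder M] [IsOrderedCancelAddMonoid M]

theorem splitSum_le_splitSum {a b : ℕ → M} {N l j : ℕ} (hlN : l ≤ N)
    (hbefore : ∀ i < l, a i ≤ b (N - 1 - i))
    (hafter : ∀ i, l ≤ i → i < N → b (N - 1 - i) ≤ a i) (hjN : j ≤ N) :
    splitSum a b N l ≤ splitSum a b N j := by
  rcases le_total j l with hjl | hlj
  · refine antitoneOn_of_add_one_le Set.ordConnected_Icc (fun i _ _ hi => ?_)
      ⟨Nat.zero_le j, hjl⟩ ⟨Nat.zero_le l, le_rfl⟩ hjl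
    have hil : i < l := hi.2
    exact le_of_add_le_add_right <| (splitSum_succ_add a b (hil.trans_le hlN)).trans_le
      (add_le_add le_rfl (hbefore i hil))
  · refine monotoneOn_of_le_add_one Set.ordConnected_Icc (fun i _ hi hi1 => ?_)
      ⟨le_rfl, hlN⟩ ⟨hlj, hjN⟩ hlj
    have hiN : i < N := hi1.2
    exact le_of_add_le_add_right <| (add_le_add le_rfl (hafter i hi.1 hiN)).trans_eq
      (splitSum_succ_add a b hiN).symm

end SplitSum

variable {p : ℕ}

theorem Delta_zero (hp : 3 ≤ p) : Delta p 0 = 0 :=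
  Nat.choose_eq_zero_of_lt (by omega)

theorem Delta_one (hp : 2 ≤ p) : Delta p 1 = 1 := by
  simp [Delta, show 1 + p - 3 = p - 2 by omega]

theorem Delta_succ_pos (hp : 2 ≤ p) (k : ℕ) : 0 < Delta p (k + 1) :=
  Nat.choose_pos (by omega)

theorem Delta_three (k : ℕ) : Delta 3 k = k := by
  simp [Delta]

theorem Delta_succ (hp : 3 ≤ p) (k : ℕ) :
    Delta p (k + 1) = Delta p k + Delta (p - 1) (k + 1) := by
  obtain ⟨q, rfl⟩ : ∃ q, p = q + 3 := ⟨p - 3, by omega⟩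
  simp only [Delta, show k + 1 + (q + 3) - 3 = k + q + 1 by omega,
    show k + (q + 3) - 3 = k + q by omega, show k + 1 + (q + 3 - 1) - 3 = k + q by omega,
    show q + 3 - 2 = q + 1 by omega, show q + 3 - 1 - 2 = q by omega, Nat.choose_succ_succ']
  ring

theorem Delta_strictMono (hp : 3 ≤ p) : StrictMono (Delta p) :=
  strictMono_nat_of_lt_succ fun k => by
    rw [Delta_succ hp]
    exact Nat.lt_add_of_pos_right (Delta_succ_pos (by omega) k)

theorem le_Delta (hp : 3 ≤ p) (k : ℕ) : k ≤ Delta p k :=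
  (Delta_strictMono hp).id_le k

theorem gc_Delta_nabla (hp : 3 ≤ p) : GaloisConnection (Delta p) (nabla p) := fun k n =>
  ⟨fun h => Nat.le_findGreatest ((le_Delta hp k).trans h) h,
   fun h => ((Delta_strictMono hp).monotone h).trans
     (Nat.findGreatest_spec (P := fun k => Delta p k ≤ n) (Nat.zero_le n)
       (by simp [Delta_zero hp]))⟩

theorem nabla_eq_iff (hp : 3 ≤ p) {n k : ℕ} :
    nabla p n = k ↔ Delta p k ≤ n ∧ n < Delta p (k + 1) := by
  rw [(gc_Delta_nabla hp).le_iff_le, (gc_Delta_nabla hp).lt_iff_lt]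
  omega

theorem nabla_three (n : ℕ) : nabla 3 n = n :=
  (nabla_eq_iff le_rfl).2 (by simp [Delta_three])

def nablaSum (p N : ℕ) : ℕ := ∑ n ∈ Finset.range N, 2 ^ nabla p n

theorem nablaSum_three (N : ℕ) : nablaSum 3 N = 2 ^ N - 1 := by
  simp [nablaSum, nabla_three, Nat.geomSum_eq le_rfl]

theorem nablaSum_Delta_add (hp : 3 ≤ p) (k : ℕ) {t : ℕ} (ht : t ≤ Delta (p - 1) (k + 1)) :
    nablaSum p (Delta p k + t) = nablaSum p (Delta p k) + t * 2 ^ k := by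
  have hblock : ∀ i ∈ Finset.range t, 2 ^ nabla p (Delta p k + i) = 2 ^ k := fun i hi => by
    have := Finset.mem_range.1 hi
    rw [(nabla_eq_iff (k := k) hp).2 ⟨by omega, by rw [Delta_succ hp k]; omega⟩]
  rw [nablaSum, Finset.sum_range_add, Finset.sum_congr rfl hblock]
  simp [nablaSum]

theorem nablaSum_Delta_succ (hp : 3 ≤ p) (k : ℕ) :
    nablaSum p (Delta p (k + 1)) = nablaSum p (Delta p k) + Delta (p - 1) (k + 1) * 2 ^ k := by
  rw [Delta_succ hp, nablaSum_Delta_add hp k le_rfl]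

theorem nablaSum_one (p : ℕ) : nablaSum p 1 = 1 := by
  simp [nablaSum, nabla]

theorem two_mul_nablaSum_Delta_add (hp : 4 ≤ p) (k : ℕ) :
    2 * nablaSum p (Delta p k) + nablaSum (p - 1) (Delta (p - 1) (k + 1)) =
      nablaSum p (Delta p (k + 1)) := by
  induction k with
  | zero =>
    rw [Delta_zero (by omega), Delta_one (by omega), Delta_one (by omega), nablaSum_one,
      nablaSum_one]
    simp [nablaSum]
  | succ k ih =>
    rw [nablaSum_Delta_succ (p := p) (by omega) k,
      nablaSum_Delta_succ (p := p) (by omega) (k + 1), nablaSum_Delta_succ (p := p - 1) (by omega),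
      Delta_succ (p := p - 1) (by omega) (k + 1), ← ih]
    ring

theorem two_mul_nablaSum_add_nablaSum_eq_splitSum (p N l : ℕ) :
    2 * nablaSum p l + nablaSum (p - 1) (N - l) =
      splitSum (fun i => 2 ^ (nabla p i + 1)) (fun i => 2 ^ nabla (p - 1) i) N l := by
  simp [splitSum, nablaSum, Finset.mul_sum, pow_succ, mul_comm]

section Blocks

variable {K l N : ℕ}

-- `l` and `N - l` cut `i ↦ 2 ^ (∇_p(i) + 1)` and `j ↦ 2 ^ ∇_{p-1}(j)` inside their blocks of
-- value `2 ^ (K + 1)`.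

theorem two_mul_nablaSum_add_nablaSum_eq_of_blocks (hp : 4 ≤ p) (hlK : Delta p K ≤ l)
    (hlK' : l ≤ Delta p (K + 1)) (hNlK : Delta (p - 1) (K + 1) ≤ N - l)
    (hNlK' : N - l ≤ Delta (p - 1) (K + 2)) (hlN : l ≤ N) :
    2 * nablaSum p l + nablaSum (p - 1) (N - l) = nablaSum p N := by
  have hp3 : 3 ≤ p := by omega
  have hΔ := Delta_succ hp3 K
  have hΔ' : Delta p (K + 2) = Delta p (K + 1) + Delta (p - 1) (K + 2) := Delta_succ hp3 (K + 1)
  have hΔ'' : Delta (p - 1) (K + 2) = Delta (p - 1) (K + 1) + Delta (p - 1 - 1) (K + 2) :=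
    Delta_succ (by omega) (K + 1)
  obtain ⟨t₁, ht₁, rfl⟩ : ∃ t₁ ≤ Delta (p - 1) (K + 1), l = Delta p K + t₁ :=
    ⟨l - Delta p K, by omega, by omega⟩
  obtain ⟨t₂, ht₂, hN⟩ : ∃ t₂ ≤ Delta (p - 1 - 1) (K + 2),
      N - (Delta p K + t₁) = Delta (p - 1) (K + 1) + t₂ :=
    ⟨N - (Delta p K + t₁) - Delta (p - 1) (K + 1), by omega, by omega⟩
  obtain rfl : N = Delta p (K + 1) + (t₁ + t₂) := by omega
  rw [hN, nablaSum_Delta_add hp3 K ht₁, nablaSum_Delta_add (by omega) (K + 1) ht₂,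
    nablaSum_Delta_add hp3 (K + 1) (by show _ ≤ Delta (p - 1) (K + 2); omega),
    ← two_mul_nablaSum_Delta_add hp]
  ring

theorem two_mul_nablaSum_add_nablaSum_le_of_blocks (hp : 4 ≤ p) (hlK : Delta p K ≤ l)
    (hlK' : l ≤ Delta p (K + 1)) (hNlK : Delta (p - 1) (K + 1) ≤ N - l)
    (hNlK' : N - l ≤ Delta (p - 1) (K + 2)) (hlN : l ≤ N)
    {j : ℕ} (hjN : j ≤ N) :
    2 * nablaSum p l + nablaSum (p - 1) (N - l) ≤
      2 * nablaSum p j + nablaSum (p - 1) (N - j) := by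
  have gc := gc_Delta_nabla (p := p) (by omega)
  have gc' := gc_Delta_nabla (p := p - 1) (by omega)
  simp only [two_mul_nablaSum_add_nablaSum_eq_splitSum]
  refine splitSum_le_splitSum hlN (fun i hi => ?_) (fun i hli hiN => ?_) hjN
  · have h₁ : nabla p i < K + 1 := gc.lt_iff_lt.1 (by omega)
    have h₂ : K + 1 ≤ nabla (p - 1) (N - 1 - i) := gc'.le_iff_le.1 (by omega)
    exact Nat.pow_le_pow_right two_pos (by omega)
  · have h₁ : K ≤ nabla p i := gc.le_iff_le.1 (by omega)
    have h₂ : nabla (p - 1) (N - 1 - i) < K + 2 := gc'.lt_iff_lt.1 (by omega)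
    exact Nat.pow_le_pow_right two_pos (by omega)

end Blocks

theorem isLeast_nablaSum (hp : 4 ≤ p) {N : ℕ} (hN : 2 ≤ N) :
    IsLeast ((fun l => 2 * nablaSum p l + nablaSum (p - 1) (N - l)) '' Set.Ico 1 N)
      (nablaSum p N) := by
  have hp3 : 3 ≤ p := by omega
  obtain ⟨K, hK⟩ : ∃ K, nabla p (N - 1) = K + 1 :=
    Nat.exists_eq_add_of_le' <| (gc_Delta_nabla hp3).le_iff_le.1 <| by
      rw [Delta_one (by omega)]; omega
  obtain ⟨hNK, hNK'⟩ : Delta p (K + 1) ≤ N - 1 ∧ N - 1 < Delta p (K + 2) :=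
    (nabla_eq_iff hp3).1 hK
  have hΔ := Delta_succ hp3 K
  have hΔ' : Delta p (K + 2) = Delta p (K + 1) + Delta (p - 1) (K + 2) := Delta_succ hp3 (K + 1)
  have hpos := Delta_succ_pos (p := p - 1) (by omega) K
  have hmono : Delta (p - 1) (K + 1) ≤ Delta (p - 1) (K + 2) :=
    (Delta_strictMono (by omega)).monotone (by omega)
  obtain ⟨l, hl⟩ : ∃ l, l = min (Delta p (K + 1)) (N - Delta (p - 1) (K + 1)) := ⟨_, rfl⟩
  have hlK : Delta p K ≤ l := by omega
  have hlK' : l ≤ Delta p (K + 1) := by omega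
  have hNlK : Delta (p - 1) (K + 1) ≤ N - l := by omega
  have hNlK' : N - l ≤ Delta (p - 1) (K + 2) := by omega
  have hcost := two_mul_nablaSum_add_nablaSum_eq_of_blocks hp hlK hlK' hNlK hNlK' (by omega)
  refine ⟨⟨l, ⟨by omega, by omega⟩, hcost⟩, ?_⟩
  rintro _ ⟨j, hj, rfl⟩
  exact hcost ▸
    two_mul_nablaSum_add_nablaSum_le_of_blocks hp hlK hlK' hNlK hNlK' (by omega) hj.2.le

theorem Phi_zero (p : ℕ) : Phi p 0 = 0 := by
  simp [Phi]

theorem Phi_three (N : ℕ) : Phi 3 N = 2 ^ N - 1 := by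
  cases N <;> simp [Phi]

theorem Phi_one (hp : 4 ≤ p) : Phi p 1 = 1 := by
  obtain ⟨q, rfl⟩ : ∃ q, p = q + 4 := ⟨p - 4, by omega⟩
  simp [Phi]

theorem isLeast_Phi (hp : 4 ≤ p) {N : ℕ} (hN : 2 ≤ N) :
    IsLeast ((fun l => 2 * Phi p l + Phi (p - 1) (N - l)) '' Set.Ico 1 N) (Phi p N) := by
  obtain ⟨q, rfl⟩ : ∃ q, p = q + 4 := ⟨p - 4, by omega⟩
  obtain ⟨M, rfl⟩ : ∃ M, N = M + 2 := ⟨N - 2, by omega⟩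
  rw [Phi]
  constructor
  · obtain ⟨⟨l, hl⟩, -, hmin⟩ := Finset.exists_mem_eq_inf' _
      (fun l : Finset.Icc 1 (M + 1) => 2 * Phi (q + 4) l.1 + Phi (q + 3) (M + 2 - l.1))
    rw [Finset.mem_Icc] at hl
    exact ⟨l, ⟨hl.1, by omega⟩, hmin.symm⟩
  · rintro _ ⟨l, hl, rfl⟩
    exact Finset.inf'_le _
      (Finset.mem_attach _ ⟨l, Finset.mem_Icc.2 ⟨hl.1, Nat.le_of_lt_succ hl.2⟩⟩)

theorem Phi_eq_nablaSum (hp : 3 ≤ p) (N : ℕ) : Phi p N = nablaSum p N := by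
  induction p, hp using Nat.le_induction generalizing N with
  | base => rw [Phi_three, nablaSum_three]
  | succ p hp ih =>
    induction N using Nat.strong_induction_on with
    | _ N ihN =>
      rcases lt_or_ge N 2 with hN | hN
      · interval_cases N
        · simp [Phi_zero, nablaSum]
        · rw [Phi_one (by omega), nablaSum_one]
      · have hcost : Set.EqOn (fun l => 2 * Phi (p + 1) l + Phi (p + 1 - 1) (N - l))
            (fun l => 2 * nablaSum (p + 1) l + nablaSum (p + 1 - 1) (N - l)) (Set.Ico 1 N) :=
          fun l hl => by simp only [ihN l hl.2, Nat.add_sub_cancel, ih]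
        have hPhi := isLeast_Phi (p := p + 1) (by omega) hN
        rw [hcost.image_eq] at hPhi
        exact hPhi.unique (isLeast_nablaSum (by omega) hN)

end FrameStewart

theorem phi_eq_sum_general (p N : ℕ) (hp : 3 ≤ p) :
    Phi p N = ∑ n ∈ Finset.range N, 2 ^ nabla p n :=
  FrameStewart.Phi_eq_nablaSum hp N

/-- For all `p ≥ 3` and `N ≥ 1`, `Φ(p, N) = Σ_{n=0}^{N-1} 2^{∇_p(n)}`. -/
theorem phi_eq_sum (p N : ℕ) (hp : 3 ≤ p) (hN : 1 ≤ N) :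
    Phi p N = ∑ n ∈ Finset.range N, 2 ^ nabla p n :=
  phi_eq_sum_general p N hp
end

section
/- Let N ≥ 1 and write N - 1 = C(m+1, 2) + t with 0 ≤ t ≤ m (this decomposition exists and is unique). Then Φ(4, N) = 1 + (m+t)·2^m, where Φ(4, N) = Σ_{n=0}^{N-1} 2^{∇_4(n)} and ∇_4(n) = max{k ≥ 0 : C(k+1, 2) ≤ n}. -/
/-! `∇_4` equals `m` on the block of `m + 1` integers `C(m+1, 2) ≤ n < C(m+2, 2)`, so summing
`2 ^ ∇_4` one block at a time gives `Φ(4, C(m+1, 2) + 1) = 1 + m·2^m`, and each further step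
inside the block adds `2^m`. -/

/-- `∇_4(n) := max{k ≥ 0 : C(k+1, 2) ≤ n}`. -/
def nabla4 (n : ℕ) : ℕ := Nat.findGreatest (fun k => Nat.choose (k + 1) 2 ≤ n) n

/-- `Φ(4, N) := Σ_{n=0}^{N-1} 2^{∇_4(n)}`. -/
def Phi4 (N : ℕ) : ℕ := ∑ n ∈ Finset.range N, 2 ^ nabla4 n

namespace Nat

theorem choose_succ_succ_two (m : ℕ) : (m + 2).choose 2 = (m + 1).choose 2 + (m + 1) := by
  rw [choose_succ_succ', choose_one_right, add_comm]

theorem le_choose_succ_two (m : ℕ) : m ≤ (m + 1).choose 2 := by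
  rw [choose_succ_succ, choose_one_right]
  exact le_add_right m _

end Nat

theorem nabla4_choose_add {m t : ℕ} (htm : t ≤ m) : nabla4 ((m + 1).choose 2 + t) = m := by
  refine Nat.findGreatest_eq_iff.mpr
    ⟨(Nat.le_choose_succ_two m).trans (Nat.le_add_right _ _), fun _ => by omega, ?_⟩
  intro k hmk _ hk
  have : (m + 2).choose 2 ≤ (k + 1).choose 2 := Nat.choose_le_choose 2 (by omega)
  rw [Nat.choose_succ_succ_two] at this
  omega

theorem phi4_succ (n : ℕ) : Phi4 (n + 1) = Phi4 n + 2 ^ nabla4 n :=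
  Finset.sum_range_succ _ n

theorem phi4_choose_add {m t : ℕ} (htm : t ≤ m) :
    Phi4 ((m + 1).choose 2 + t + 1) = Phi4 ((m + 1).choose 2 + 1) + t * 2 ^ m := by
  induction t with
  | zero => simp
  | succ s ih =>
    rw [← add_assoc, phi4_succ, ih (by omega), add_assoc _ s 1, nabla4_choose_add htm]
    ring

theorem phi4_choose_succ_two (m : ℕ) : Phi4 ((m + 1).choose 2 + 1) = 1 + m * 2 ^ m := by
  induction m with
  | zero => simp [Phi4, nabla4]
  | succ m ih =>
    have hlast : nabla4 ((m + 1).choose 2 + m + 1) = m + 1 := by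
      simpa only [Nat.choose_succ_succ_two, add_zero, add_assoc] using
        nabla4_choose_add (m := m + 1) (t := 0) (Nat.zero_le _)
    rw [Nat.choose_succ_succ_two, ← add_assoc, phi4_succ, phi4_choose_add le_rfl, ih, hlast]
    ring

/-- If `N ≥ 1` and `N - 1 = C(m+1, 2) + t` with `0 ≤ t ≤ m`, then
`Φ(4, N) = 1 + (m+t)·2^m`. -/
theorem phi4_closed_form (N m t : ℕ) (hN : 1 ≤ N)
    (hdec : N - 1 = Nat.choose (m + 1) 2 + t) (htm : t ≤ m) :
    Phi4 N = 1 + (m + t) * 2 ^ m := by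
  obtain rfl : N = (m + 1).choose 2 + t + 1 := by omega
  rw [phi4_choose_add htm, phi4_choose_succ_two]
  ring
end

section
/- For all N ≥ 1, 2·Φ(4, N+1) − 2 ≥ Φ(4, N+2) − 1, i.e., (Φ(4,N+1)−1)/2 ≥ (Φ(4,N+2)−1)/4. -/
/-!
Since `Φ(4, N+2) = Φ(4, N+1) + 2^{∇_4(N+1)}`, the claim is `2^{∇_4(n)} + 1 ≤ Φ(4, n)` for `n ≥ 2`.
As `∇_4` grows by at most one per step, the summands `2^{∇_4(n)}` at most double, so this bound
propagates by induction from `n = 2`, where both sides equal `3`.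
-/

open Finset

theorem Finset.add_le_sum_range_of_le_add_self {M : Type*} [AddCommMonoid M] [PartialOrder M]
    [IsOrderedAddMonoid M] {f : ℕ → M} {m : ℕ} {c : M}
    (hf : ∀ n, m ≤ n → f (n + 1) ≤ f n + f n) (hm : f m + c ≤ ∑ i ∈ range m, f i) :
    ∀ n, m ≤ n → f n + c ≤ ∑ i ∈ range n, f i := by
  intro n hmn
  induction n, hmn using Nat.le_induction with
  | base => exact hm
  | succ n hmn ih =>
    calc f (n + 1) + c ≤ f n + (f n + c) := by
          rw [← add_assoc]; exact add_le_add (hf n hmn) le_rfl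
      _ ≤ f n + ∑ i ∈ range n, f i := add_le_add le_rfl ih
      _ = ∑ i ∈ range (n + 1), f i := by rw [sum_range_succ, add_comm]

theorem choose_succ_two_nabla4_le (n : ℕ) : Nat.choose (nabla4 n + 1) 2 ≤ n :=
  Nat.findGreatest_spec (P := fun k => Nat.choose (k + 1) 2 ≤ n) (Nat.zero_le n) (by simp)

theorem le_nabla4 {k n : ℕ} (h : Nat.choose (k + 1) 2 ≤ n) : k ≤ nabla4 n := by
  have hk : k ≤ Nat.choose (k + 1) 2 := by
    rw [Nat.choose_succ_succ', Nat.choose_one_right]; omega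
  exact Nat.le_findGreatest (hk.trans h) h

theorem nabla4_succ_le (n : ℕ) : nabla4 (n + 1) ≤ nabla4 n + 1 := by
  cases hk : nabla4 (n + 1) with
  | zero => omega
  | succ k =>
    have pascal : (k + 2).choose 2 = (k + 1) + (k + 1).choose 2 := by
      rw [Nat.choose_succ_succ' (k + 1) 1, Nat.choose_one_right]
    have h := choose_succ_two_nabla4_le (n + 1)
    rw [hk, pascal] at h
    have hkn : k ≤ nabla4 n := le_nabla4 (by omega)
    omega

theorem two_pow_nabla4_add_one_le_phi4 {n : ℕ} (hn : 2 ≤ n) : 2 ^ nabla4 n + 1 ≤ Phi4 n :=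
  Finset.add_le_sum_range_of_le_add_self (f := fun i => 2 ^ nabla4 i)
    (fun i _ => by
      rw [← two_mul, ← pow_succ']
      exact Nat.pow_le_pow_right two_pos (nabla4_succ_le i))
    (by decide) n hn

/-- For all `N ≥ 1`, `2·Φ(4, N+1) − 2 ≥ Φ(4, N+2) − 1`. -/
theorem phi4_doubling (N : ℕ) (hN : 1 ≤ N) :
    2 * (Phi4 (N + 1) : ℤ) - 2 ≥ (Phi4 (N + 2) : ℤ) - 1 := by
  have hstep : Phi4 (N + 2) = Phi4 (N + 1) + 2 ^ nabla4 (N + 1) := sum_range_succ _ _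
  have hbound := two_pow_nabla4_add_one_le_phi4 (n := N + 1) (by omega)
  have hnat : Phi4 (N + 2) + 1 ≤ 2 * Phi4 (N + 1) := by omega
  omega
end

section
/- For all p ≥ 4 and N ≥ 2, and every 1 ≤ ℓ ≤ N−1, Γ(p, N) ≥ 2·min{Γ(p, N−ℓ), Γ(p−1, ℓ)}, where Γ(p, N) is the minimum length of a path in the Hanoi graph H(p, N) that moves every disk at least once (minimized over all starting configurations). -/
/-- A configuration of `N` disks (labelled `0, …, N-1` by increasing size) on
`p` pegs: disk `i` sits on peg `u i`. Disks on a common peg are stacked in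
increasing size, so a configuration is just the assignment of disks to pegs. -/
def Conf (p N : ℕ) : Type := Fin N → Fin p

/-- `IsMove u v` holds iff `v` is obtained from `u` by one legal move: some
disk `d` changes pegs, every other disk stays put, and no smaller disk lies on
the source peg or the target peg of `d` (so `d` is topmost and is placed on a
larger disk or an empty peg). -/
def IsMove {p N : ℕ} (u v : Conf p N) : Prop :=
  ∃ d : Fin N, u d ≠ v d ∧ (∀ e, e ≠ d → u e = v e) ∧
    ∀ e : Fin N, (e : ℕ) < (d : ℕ) → u e ≠ u d ∧ u e ≠ v d

/-- A path of length `len` in the Hanoi graph `H(p, N)`. -/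
structure HanoiPath (p N : ℕ) where
  len : ℕ
  conf : ℕ → Conf p N
  step : ∀ t, t < len → IsMove (conf t) (conf (t + 1))

/-- A path is essential if every disk moves at least once along it. -/
def Essential {p N : ℕ} (γ : HanoiPath p N) : Prop :=
  ∀ d : Fin N, ∃ t, t < γ.len ∧ γ.conf t d ≠ γ.conf (t + 1) d

/-- `Γ(p, N)`: the minimum length of an essential path in `H(p, N)`, over all
starting (and ending) configurations. -/
noncomputable def HanoiGamma (p N : ℕ) : ℕ :=
  sInf {L | ∃ γ : HanoiPath p N, γ.len = L ∧ Essential γ}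

/-- Graph distance in `H(p, N)`: the minimum length of a path from `u` to `v`. -/
noncomputable def hanoiDist {p N : ℕ} (u v : Conf p N) : ℕ :=
  sInf {L | ∃ γ : HanoiPath p N, γ.len = L ∧ γ.conf 0 = u ∧ γ.conf L = v}


/-!
Cut an essential path of length `L` into a prefix `[0, a]` and a suffix `[b, L]` with `a ≤ b`,
each of which is *heavy*: either at least `N - ℓ` disks move in it, or some disk `s` stays put
while at least `ℓ` disks larger than `s` move. Restricting the path to `N - ℓ` moving disks gives
an essential path in `H(p, N - ℓ)`; in the second case the `ℓ` larger disks can never visit the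
peg of `s`, so restricting to them gives an essential path in `H(p - 1, ℓ)`. Either way a heavy
segment has length at least `min {Γ(p, N - ℓ), Γ(p - 1, ℓ)}`.

Such a cut exists: take the shortest heavy prefix `[0, t]`. Two sets of disks covering all disks
cannot both be light (look at the smallest disk missing from one of them), so the suffix from
`t - 1` is heavy. A finer count, using that a single disk moves at step `t - 1`, shows that
already the suffix from `t` is heavy.
-/

open Finset

lemma eq_of_forall_eq_succ {α : Type*} {f : ℕ → α} {a b : ℕ}
    (h : ∀ t, a ≤ t → t < b → f t = f (t + 1)) {t : ℕ} (hat : a ≤ t) (htb : t ≤ b) :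
    f t = f a := by
  induction t, hat using Nat.le_induction with
  | base => rfl
  | succ t hat ih => rw [← h t hat (by omega), ih (by omega)]

section IsHeavy

variable {N : ℕ}

def IsHeavy (l : ℕ) (M : Finset (Fin N)) : Prop :=
  N - l ≤ M.card ∨ ∃ s ∉ M, l ≤ (M ∩ Ioi s).card

variable {l : ℕ} {M M₁ M₂ : Finset (Fin N)}

lemma isHeavy_univ (l : ℕ) : IsHeavy l (univ : Finset (Fin N)) :=
  Or.inl (by simp)

lemma card_lt_of_not_isHeavy (h : ¬IsHeavy l M) : M.card < N - l :=
  lt_of_not_ge fun h' => h (Or.inl h')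

lemma card_inter_Ioi_lt_of_not_isHeavy (h : ¬IsHeavy l M) {s : Fin N} (hs : s ∉ M) :
    (M ∩ Ioi s).card < l :=
  lt_of_not_ge fun h' => h (Or.inr ⟨s, hs, h'⟩)

lemma two_le_card_compl_union (h₁ : ¬IsHeavy l M₁) (h₂ : ¬IsHeavy l M₂) {s : Fin N}
    (hs : s ∉ M₁) (hlow : ∀ d ∉ M₂, s < d) : 2 ≤ (M₁ ∪ M₂)ᶜ.card := by
  have hcover : M₂ᶜ ⊆ (M₁ ∪ M₂)ᶜ ∪ (M₁ ∩ Ioi s) := by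
    intro d hd
    rw [mem_compl] at hd
    by_cases hd₁ : d ∈ M₁
    · exact mem_union_right _ (mem_inter.2 ⟨hd₁, mem_Ioi.2 (hlow d hd)⟩)
    · exact mem_union_left _ (by simp [hd₁, hd])
  have := (card_le_card hcover).trans (card_union_le _ _)
  have := card_lt_of_not_isHeavy h₂
  have := card_inter_Ioi_lt_of_not_isHeavy h₁ hs
  simp only [card_compl, Fintype.card_fin] at *
  omega

lemma two_le_card_compl_union_or (h₁ : ¬IsHeavy l M₁) (h₂ : ¬IsHeavy l M₂) :
    2 ≤ (M₁ ∪ M₂)ᶜ.card ∨ ∃ s, s ∉ M₁ ∧ s ∉ M₂ ∧ ∀ d < s, d ∈ M₁ ∧ d ∈ M₂ := by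
  have hne : (M₁ ∩ M₂)ᶜ.Nonempty := by
    obtain ⟨s, hs⟩ : M₁ᶜ.Nonempty := by
      rw [nonempty_iff_ne_empty, Ne, compl_eq_empty_iff]
      rintro rfl
      exact absurd (card_lt_of_not_isHeavy h₁) (by simp)
    exact ⟨s, by simp_all⟩
  set s := (M₁ ∩ M₂)ᶜ.min' hne
  have hs : s ∉ M₁ ∩ M₂ := mem_compl.1 ((M₁ ∩ M₂)ᶜ.min'_mem hne)
  have hmin : ∀ d ∉ M₁ ∩ M₂, s ≤ d := fun d hd => (M₁ ∩ M₂)ᶜ.min'_le d (mem_compl.2 hd)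
  have hlow : ∀ d < s, d ∈ M₁ ∧ d ∈ M₂ := fun d hd =>
    mem_inter.1 (by_contra fun h => (hmin d h).not_gt hd)
  by_cases hs₁ : s ∈ M₁
  · refine Or.inl (union_comm M₁ M₂ ▸ two_le_card_compl_union h₂ h₁ (s := s) ?_ ?_)
    · exact fun hs₂ => hs (mem_inter.2 ⟨hs₁, hs₂⟩)
    · exact fun d hd => (hmin d (by simp [hd])).lt_of_ne (by rintro rfl; exact hd hs₁)
  by_cases hs₂ : s ∈ M₂
  · refine Or.inl (two_le_card_compl_union h₁ h₂ hs₁ fun d hd => ?_)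
    exact (hmin d (by simp [hd])).lt_of_ne (by rintro rfl; exact hd hs₂)
  exact Or.inr ⟨s, hs₁, hs₂, hlow⟩

lemma isHeavy_or_isHeavy_of_union_eq_univ (hU : M₁ ∪ M₂ = univ) :
    IsHeavy l M₁ ∨ IsHeavy l M₂ := by
  by_contra! ⟨h₁, h₂⟩
  rcases two_le_card_compl_union_or h₁ h₂ with h | ⟨s, hs₁, hs₂, -⟩
  · simp [hU] at h
  · simpa [hs₁, hs₂] using hU.ge (mem_univ s)

lemma card_eq_add_card_inter_Ioi {D : Fin N} (hD : D ∉ M) (hlow : ∀ d < D, d ∈ M) :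
    M.card = D + (M ∩ Ioi D).card := by
  have hsplit : M = Iio D ∪ (M ∩ Ioi D) := by
    ext d
    rcases lt_trichotomy d D with h | rfl | h
    · simp [h, hlow d h]
    · simp [hD]
    · simp [h, h.not_gt]
  rw [← Fin.card_Iio D, ← card_union_of_disjoint]
  · exact congrArg card hsplit
  · exact disjoint_left.2 fun d h₁ h₂ => (mem_Iio.1 h₁).not_gt (mem_Ioi.1 (mem_inter.1 h₂).2)

lemma sub_le_card_add_one_of_isHeavy_insert (h : ¬IsHeavy l M) {D : Fin N}
    (hlow : ∀ d < D, d ∈ M) (h' : IsHeavy l (insert D M)) : N - l ≤ M.card + 1 := by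
  rcases h' with h' | ⟨s, hs, hcard⟩
  · exact h'.trans (card_insert_le D M)
  · rw [mem_insert, not_or] at hs
    have hDs : D < s := lt_of_le_of_ne (not_lt.1 fun h => hs.2 (hlow s h)) (Ne.symm hs.1)
    rw [insert_inter_of_notMem (by simp [hDs.le])] at hcard
    exact absurd hcard (not_le.2 (card_inter_Ioi_lt_of_not_isHeavy h hs.2))

lemma isHeavy_or_isHeavy_of_insert_union_eq_univ {D : Fin N} (hU : insert D (M₁ ∪ M₂) = univ)
    (h₁' : IsHeavy l (insert D M₁)) (h₂' : IsHeavy l (insert D M₂)) :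
    IsHeavy l M₁ ∨ IsHeavy l M₂ := by
  by_contra! ⟨h₁, h₂⟩
  have hcompl : (M₁ ∪ M₂)ᶜ ⊆ {D} := fun d hd => by
    simpa [mem_compl.1 hd] using hU.ge (mem_univ d)
  rcases two_le_card_compl_union_or h₁ h₂ with h | ⟨s, hs₁, hs₂, hlow⟩
  · have := (card_le_card hcompl).trans_eq (card_singleton D)
    omega
  obtain rfl : s = D := by simpa using hcompl (by simp [hs₁, hs₂])
  have hlow₁ : ∀ d < s, d ∈ M₁ := fun d hd => (hlow d hd).1
  have hlow₂ : ∀ d < s, d ∈ M₂ := fun d hd => (hlow d hd).2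
  have hcover : Ioi s ⊆ (M₁ ∩ Ioi s) ∪ (M₂ ∩ Ioi s) := fun d hd => by
    have := hU.ge (mem_univ d)
    simp only [mem_insert, mem_union] at this
    rcases this with rfl | h | h
    · simp at hd
    · simp [h, mem_Ioi.1 hd]
    · simp [h, mem_Ioi.1 hd]
  have := (card_le_card hcover).trans (card_union_le _ _)
  rw [Fin.card_Ioi] at this
  have := card_eq_add_card_inter_Ioi hs₁ hlow₁
  have := card_eq_add_card_inter_Ioi hs₂ hlow₂
  have := sub_le_card_add_one_of_isHeavy_insert h₁ hlow₁ h₁'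
  have := sub_le_card_add_one_of_isHeavy_insert h₂ hlow₂ h₂'
  have := card_lt_of_not_isHeavy h₁
  have := card_lt_of_not_isHeavy h₂
  have := card_inter_Ioi_lt_of_not_isHeavy h₁ hs₁
  have := card_inter_Ioi_lt_of_not_isHeavy h₂ hs₂
  omega

end IsHeavy

section Moves

variable {p N : ℕ}

lemma IsMove.eq_iff_of_lt {u v : Conf p N} (h : IsMove u v) {s d : Fin N} (hsd : s < d) :
    u d = u s ↔ v d = u s := by
  obtain ⟨D, -, hfix, hsmall⟩ := h
  by_cases hdD : d = D
  · subst hdD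
    exact iff_of_false (hsmall s hsd).1.symm (hsmall s hsd).2.symm
  · rw [hfix d hdD]

lemma IsMove.restrict_or_eq {k q : ℕ} {u v : Conf p N} (h : IsMove u v) {ι : Fin k → Fin N}
    (hι : StrictMono ι) {ρ : Fin p → Fin q} {P : Set (Fin p)} (hρ : Set.InjOn ρ P)
    (hu : ∀ i, u (ι i) ∈ P) (hv : ∀ i, v (ι i) ∈ P) :
    IsMove (p := q) (N := k) (fun i => ρ (u (ι i))) (fun i => ρ (v (ι i))) ∨
      (fun i => ρ (u (ι i))) = (fun i => ρ (v (ι i))) := by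
  obtain ⟨D, hD, hfix, hsmall⟩ := h
  by_cases hrange : ∃ i₀, ι i₀ = D
  · obtain ⟨i₀, rfl⟩ := hrange
    refine Or.inl ⟨i₀, fun h => hD (hρ (hu i₀) (hv i₀) h), fun i hi => ?_, fun i hi => ?_⟩
    · exact congrArg ρ (hfix _ (hι.injective.ne hi))
    · have := hsmall (ι i) (hι hi)
      exact ⟨fun h => this.1 (hρ (hu i) (hu i₀) h), fun h => this.2 (hρ (hu i) (hv i₀) h)⟩
  · push Not at hrange
    exact Or.inr (funext fun i => congrArg ρ (hfix _ (hrange i)))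

def Conf.snoc (u : Conf p N) (x : Fin p) : Conf p (N + 1) :=
  Fin.snoc (α := fun _ => Fin p) u x

@[simp]
lemma Conf.snoc_castSucc (u : Conf p N) (x : Fin p) (e : Fin N) : u.snoc x e.castSucc = u e :=
  Fin.snoc_castSucc (α := fun _ => Fin p) ..

@[simp]
lemma Conf.snoc_last (u : Conf p N) (x : Fin p) : u.snoc x (Fin.last N) = x :=
  Fin.snoc_last (α := fun _ => Fin p) ..

lemma IsMove.snoc {u v : Conf p N} (h : IsMove u v) (x : Fin p) :
    IsMove (u.snoc x) (v.snoc x) := by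
  obtain ⟨D, hD, hfix, hsmall⟩ := h
  refine ⟨D.castSucc, by simpa using hD, fun e he => ?_, fun e he => ?_⟩
  · induction e using Fin.lastCases with
    | last => simp
    | cast e => simpa using hfix e (by rintro rfl; exact he rfl)
  · induction e using Fin.lastCases with
    | last => exact absurd he (by simp)
    | cast e => simpa using hsmall e he

def Conf.const (N : ℕ) (x : Fin p) : Conf p N := fun _ => x

@[simp]
lemma Conf.const_apply (x : Fin p) (e : Fin N) : Conf.const N x e = x := rfl

lemma Conf.snoc_const (x : Fin p) : (Conf.const N x).snoc x = Conf.const (N + 1) x := by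
  funext e
  induction e using Fin.lastCases <;> simp

lemma isMove_snoc_const {x y z : Fin p} (hxy : x ≠ y) (hxz : x ≠ z) (hyz : y ≠ z) :
    IsMove ((Conf.const N z).snoc x) ((Conf.const N z).snoc y) := by
  refine ⟨Fin.last N, by simpa using hxy, fun e he => ?_, fun e he => ?_⟩
  · induction e using Fin.lastCases with
    | last => exact absurd rfl he
    | cast e => simp
  · induction e using Fin.lastCases with
    | last => exact absurd he (lt_irrefl _)
    | cast e => simpa using ⟨hxz.symm, hyz.symm⟩

lemma reflTransGen_isMove_const {x y z : Fin p} (hxy : x ≠ y) (hxz : x ≠ z) (hyz : y ≠ z) :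
    Relation.ReflTransGen IsMove (Conf.const N x) (Conf.const N y) := by
  induction N generalizing x y z with
  | zero =>
    rw [show Conf.const 0 x = Conf.const 0 y from funext fun e => e.elim0]
  | succ N ih =>
    rw [← Conf.snoc_const x, ← Conf.snoc_const y]
    refine ((ih hxz hxy hyz.symm).lift _ fun _ _ h => h.snoc x).trans ?_
    refine Relation.ReflTransGen.head (isMove_snoc_const hxy hxz hyz) ?_
    exact (ih hyz.symm hxz.symm hxy.symm).lift _ fun _ _ h => h.snoc y

end Moves

namespace HanoiPath

variable {p N : ℕ}

def snoc (γ : HanoiPath p N) (v : Conf p N) (h : IsMove (γ.conf γ.len) v) : HanoiPath p N where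
  len := γ.len + 1
  conf t := if t ≤ γ.len then γ.conf t else v
  step t ht := by
    rcases (Nat.lt_succ_iff.1 ht).lt_or_eq with ht | rfl
    · simpa [ht.le, Nat.succ_le_of_lt ht] using γ.step t ht
    · simpa using h

lemma snoc_conf_of_le (γ : HanoiPath p N) {v : Conf p N} (h : IsMove (γ.conf γ.len) v) {t : ℕ}
    (ht : t ≤ γ.len) : (γ.snoc v h).conf t = γ.conf t :=
  if_pos ht

lemma snoc_conf_len (γ : HanoiPath p N) {v : Conf p N} (h : IsMove (γ.conf γ.len) v) :
    (γ.snoc v h).conf (γ.len + 1) = v :=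
  if_neg (by omega)

lemma exists_of_reflTransGen {u v : Conf p N} (h : Relation.ReflTransGen IsMove u v) :
    ∃ γ : HanoiPath p N, γ.conf 0 = u ∧ γ.conf γ.len = v := by
  induction h with
  | refl => exact ⟨⟨0, fun _ => u, fun t ht => absurd ht (Nat.not_lt_zero t)⟩, rfl, rfl⟩
  | tail _ hbc ih =>
    obtain ⟨γ, h0, hend⟩ := ih
    exact ⟨γ.snoc _ (hend ▸ hbc), (γ.snoc_conf_of_le _ (Nat.zero_le _)).trans h0,
      γ.snoc_conf_len _⟩

lemma exists_of_isMove_or_eq (c : ℕ → Conf p N) (n : ℕ)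
    (hc : ∀ t < n, IsMove (c t) (c (t + 1)) ∨ c t = c (t + 1)) :
    ∃ γ : HanoiPath p N, γ.len ≤ n ∧ γ.conf γ.len = c n ∧
      ∀ d, (∃ t < n, c t d ≠ c (t + 1) d) → ∃ t, t < γ.len ∧ γ.conf t d ≠ γ.conf (t + 1) d := by
  induction n with
  | zero =>
    exact ⟨⟨0, fun _ => c 0, fun t ht => absurd ht (Nat.not_lt_zero t)⟩, le_rfl, rfl,
      fun d ⟨t, ht, _⟩ => absurd ht (Nat.not_lt_zero t)⟩
  | succ n ih =>
    obtain ⟨γ, hlen, hend, hmoves⟩ := ih fun t ht => hc t (by omega)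
    rcases hc n n.lt_succ_self with hmove | heq
    · refine ⟨γ.snoc _ (hend ▸ hmove), by simp [snoc, hlen], γ.snoc_conf_len _,
        fun d ⟨t, ht, hd⟩ => ?_⟩
      rcases (Nat.lt_succ_iff.1 ht).lt_or_eq with ht | rfl
      · obtain ⟨t', ht', hd'⟩ := hmoves d ⟨t, ht, hd⟩
        refine ⟨t', by simp [snoc]; omega, ?_⟩
        rwa [γ.snoc_conf_of_le _ ht'.le, γ.snoc_conf_of_le _ ht']
      · refine ⟨γ.len, by simp [snoc], ?_⟩
        rwa [γ.snoc_conf_of_le _ le_rfl, γ.snoc_conf_len, hend]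
    · refine ⟨γ, by omega, hend.trans heq, fun d ⟨t, ht, hd⟩ => hmoves d ⟨t, ?_, hd⟩⟩
      rcases (Nat.lt_succ_iff.1 ht).lt_or_eq with ht | rfl
      · exact ht
      · exact absurd (congrFun heq d) hd

lemma exists_essential (hp : 3 ≤ p) (N : ℕ) : ∃ γ : HanoiPath p N, Essential γ := by
  have h01 : (⟨0, by omega⟩ : Fin p) ≠ ⟨1, by omega⟩ := by simp
  have h02 : (⟨0, by omega⟩ : Fin p) ≠ ⟨2, by omega⟩ := by simp
  have h12 : (⟨1, by omega⟩ : Fin p) ≠ ⟨2, by omega⟩ := by simp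
  obtain ⟨γ, h0, hend⟩ :=
    exists_of_reflTransGen (reflTransGen_isMove_const (N := N) h01 h02 h12)
  refine ⟨γ, fun d => ?_⟩
  by_contra! hfix
  have := eq_of_forall_eq_succ (f := fun t => γ.conf t d) (a := 0) (b := γ.len)
    (fun t _ ht => hfix t ht) (Nat.zero_le _) le_rfl
  simp [h0, hend] at this

open scoped Classical in
noncomputable def movedAt (γ : HanoiPath p N) (t : ℕ) : Finset (Fin N) :=
  univ.filter fun d => γ.conf t d ≠ γ.conf (t + 1) d

noncomputable def movers (γ : HanoiPath p N) (a b : ℕ) : Finset (Fin N) :=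
  (Ico a b).biUnion γ.movedAt

variable (γ : HanoiPath p N)

lemma mem_movers {a b : ℕ} {d : Fin N} :
    d ∈ γ.movers a b ↔ ∃ t, a ≤ t ∧ t < b ∧ γ.conf t d ≠ γ.conf (t + 1) d := by
  simp [movers, movedAt, and_assoc]

lemma movers_union {a w b : ℕ} (haw : a ≤ w) (hwb : w ≤ b) :
    γ.movers a w ∪ γ.movers w b = γ.movers a b := by
  rw [movers, movers, movers, ← union_biUnion, Ico_union_Ico_eq_Ico haw hwb]

lemma exists_movers_eq_singleton {w : ℕ} (hw : w < γ.len) : ∃ D, γ.movers w (w + 1) = {D} := by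
  obtain ⟨D, hD, hfix, -⟩ := γ.step w hw
  refine ⟨D, eq_singleton_iff_unique_mem.2 ⟨(γ.mem_movers).2 ⟨w, le_rfl, w.lt_succ_self, hD⟩, ?_⟩⟩
  intro d hd
  obtain ⟨t, hwt, htw, hmoved⟩ := (γ.mem_movers).1 hd
  obtain rfl : t = w := by omega
  exact by_contra fun h => hmoved (hfix d h)

lemma movers_eq_univ_of_essential (hγ : Essential γ) : γ.movers 0 γ.len = univ :=
  eq_univ_of_forall fun d =>
    let ⟨t, ht, hd⟩ := hγ d
    (γ.mem_movers).2 ⟨t, Nat.zero_le t, ht, hd⟩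

lemma conf_eq_of_notMem_movers {a b : ℕ} {d : Fin N} (hd : d ∉ γ.movers a b) {t : ℕ}
    (hat : a ≤ t) (htb : t ≤ b) : γ.conf t d = γ.conf a d :=
  eq_of_forall_eq_succ (f := fun t => γ.conf t d)
    (fun t hat htb => by_contra fun h => hd ((γ.mem_movers).2 ⟨t, hat, htb, h⟩)) hat htb

/-- While `s` stays put, a larger disk can neither enter nor leave the peg of `s`. -/
lemma conf_ne_of_notMem_movers {a b : ℕ} (hb : b ≤ γ.len) {s d : Fin N}
    (hs : s ∉ γ.movers a b) (hsd : s < d) (hd : d ∈ γ.movers a b) {t : ℕ} (hat : a ≤ t)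
    (htb : t ≤ b) : γ.conf t d ≠ γ.conf a s := by
  have hinv : ∀ t, a ≤ t → t < b →
      (γ.conf t d = γ.conf a s) = (γ.conf (t + 1) d = γ.conf a s) := fun t hat htb => by
    rw [← γ.conf_eq_of_notMem_movers hs hat htb.le]
    exact propext ((γ.step t (by omega)).eq_iff_of_lt hsd)
  intro h
  obtain ⟨t', hat', htb', hd⟩ := (γ.mem_movers).1 hd
  have hon : ∀ t', a ≤ t' → t' ≤ b → γ.conf t' d = γ.conf a s := fun t' hat' htb' =>
    ((eq_of_forall_eq_succ hinv hat' htb').trans (eq_of_forall_eq_succ hinv hat htb).symm).mpr h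
  exact hd ((hon t' hat' htb'.le).trans (hon (t' + 1) (by omega) htb').symm)

variable {a b : ℕ}

lemma hanoiGamma_le_len (hγ : Essential γ) : HanoiGamma p N ≤ γ.len :=
  Nat.sInf_le ⟨γ, rfl, hγ⟩

lemma hanoiGamma_le_of_restrict (hb : b ≤ γ.len) {k q : ℕ} {ι : Fin k → Fin N}
    (hι : StrictMono ι) {ρ : Fin p → Fin q} {P : Set (Fin p)} (hρ : Set.InjOn ρ P)
    (hP : ∀ i t, a ≤ t → t ≤ b → γ.conf t (ι i) ∈ P) (hmoves : ∀ i, ι i ∈ γ.movers a b) :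
    HanoiGamma q k ≤ b - a := by
  let c : ℕ → Conf q k := fun t i => ρ (γ.conf (a + t) (ι i))
  obtain ⟨γ', hlen, -, hγ'⟩ := HanoiPath.exists_of_isMove_or_eq c (b - a) fun t ht =>
    (γ.step (a + t) (by omega)).restrict_or_eq hι hρ (fun i => hP i _ (by omega) (by omega))
      (fun i => hP i _ (by omega) (by omega))
  refine (γ'.hanoiGamma_le_len fun i => hγ' i ?_).trans hlen
  obtain ⟨t, hat, htb, ht⟩ := (γ.mem_movers).1 (hmoves i)
  refine ⟨t - a, by omega, fun h => ht ?_⟩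
  have h' : ρ (γ.conf t (ι i)) = ρ (γ.conf (t + 1) (ι i)) := by
    simpa [c, Nat.add_sub_cancel' hat, ← Nat.add_assoc] using h
  exact hρ (hP i t hat htb.le) (hP i (t + 1) (by omega) htb) h'

lemma hanoiGamma_le_of_le_card_movers (hb : b ≤ γ.len) {n : ℕ}
    (hn : n ≤ (γ.movers a b).card) : HanoiGamma p n ≤ b - a := by
  obtain ⟨K, hK, hKn⟩ := exists_subset_card_eq hn
  exact γ.hanoiGamma_le_of_restrict hb (K.orderEmbOfFin hKn).strictMono
    (Set.injOn_id Set.univ) (fun _ _ _ _ => trivial)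
    fun i => hK (K.orderEmbOfFin_mem hKn i)

lemma hanoiGamma_pred_le_of_le_card_movers_inter_Ioi (hp : 2 ≤ p)
    (hb : b ≤ γ.len) {s : Fin N} (hs : s ∉ γ.movers a b) {n : ℕ}
    (hn : n ≤ (γ.movers a b ∩ Ioi s).card) : HanoiGamma (p - 1) n ≤ b - a := by
  obtain ⟨q, rfl⟩ : ∃ q, p = q + 2 := ⟨p - 2, by omega⟩
  obtain ⟨K, hK, hKn⟩ := exists_subset_card_eq hn
  have hKmem (i : Fin n) : K.orderEmbOfFin hKn i ∈ γ.movers a b ∩ Ioi s :=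
    hK (K.orderEmbOfFin_mem hKn i)
  let c := γ.conf a s
  have hρ : Set.InjOn (Function.invFun c.succAbove) {x | x ≠ c} :=
    Set.LeftInvOn.injOn fun x hx => Function.invFun_eq (Fin.exists_succAbove_eq hx)
  exact γ.hanoiGamma_le_of_restrict hb (K.orderEmbOfFin hKn).strictMono hρ
    (fun i t hat htb => γ.conf_ne_of_notMem_movers hb hs (mem_Ioi.1 (mem_inter.1 (hKmem i)).2)
      (mem_inter.1 (hKmem i)).1 hat htb)
    fun i => (mem_inter.1 (hKmem i)).1

lemma min_hanoiGamma_le_of_isHeavy (hp : 2 ≤ p) (hb : b ≤ γ.len) {l : ℕ}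
    (h : IsHeavy l (γ.movers a b)) :
    min (HanoiGamma p (N - l)) (HanoiGamma (p - 1) l) ≤ b - a := by
  rcases h with h | ⟨s, hs, h⟩
  · exact (min_le_left _ _).trans (γ.hanoiGamma_le_of_le_card_movers hb h)
  · exact (min_le_right _ _).trans
      (γ.hanoiGamma_pred_le_of_le_card_movers_inter_Ioi hp hb hs h)

lemma exists_isHeavy_prefix_suffix (hγ : Essential γ) (l : ℕ) :
    ∃ a b, a ≤ b ∧ b ≤ γ.len ∧ IsHeavy l (γ.movers 0 a) ∧ IsHeavy l (γ.movers b γ.len) := by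
  classical
  have huniv := γ.movers_eq_univ_of_essential hγ
  have hex : ∃ t, t ≤ γ.len ∧ IsHeavy l (γ.movers 0 t) :=
    ⟨γ.len, le_rfl, huniv ▸ isHeavy_univ l⟩
  obtain ⟨htL, ht⟩ := Nat.find_spec hex
  by_cases hsuffix : IsHeavy l (γ.movers (Nat.find hex) γ.len)
  · exact ⟨_, _, le_rfl, htL, ht, hsuffix⟩
  exfalso
  obtain ⟨w, hw⟩ : ∃ w, Nat.find hex = w + 1 := Nat.exists_eq_add_one.2 <|
    Nat.pos_of_ne_zero fun h0 => hsuffix (by rw [h0, huniv]; exact isHeavy_univ l)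
  rw [hw] at ht htL hsuffix
  have hprefix : ¬IsHeavy l (γ.movers 0 w) := fun h => Nat.find_min hex (by omega) ⟨by omega, h⟩
  obtain ⟨D, hD⟩ := γ.exists_movers_eq_singleton (by omega : w < γ.len)
  have hpre : insert D (γ.movers 0 w) = γ.movers 0 (w + 1) := by
    rw [← γ.movers_union (Nat.zero_le w) w.le_succ, hD, union_comm, ← insert_eq]
  have hsuf : insert D (γ.movers (w + 1) γ.len) = γ.movers w γ.len := by
    rw [← γ.movers_union w.le_succ htL, hD, ← insert_eq]
  have hall : insert D (γ.movers 0 w ∪ γ.movers (w + 1) γ.len) = univ := by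
    rw [← union_insert, hsuf, γ.movers_union (Nat.zero_le w) (by omega), huniv]
  have hmid : IsHeavy l (γ.movers w γ.len) :=
    (isHeavy_or_isHeavy_of_union_eq_univ
      ((γ.movers_union (Nat.zero_le w) (by omega)).trans huniv)).resolve_left hprefix
  rw [← hpre] at ht
  rw [← hsuf] at hmid
  rcases isHeavy_or_isHeavy_of_insert_union_eq_univ hall ht hmid with h | h
  · exact hprefix h
  · exact hsuffix h

end HanoiPath

theorem gamma_recursive_general (p N l : ℕ) (hp : 4 ≤ p) :
    HanoiGamma p N ≥ 2 * min (HanoiGamma p (N - l)) (HanoiGamma (p - 1) l) := by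
  obtain ⟨γ₀, hγ₀⟩ := HanoiPath.exists_essential (by omega : 3 ≤ p) N
  refine le_csInf ⟨γ₀.len, γ₀, rfl, hγ₀⟩ ?_
  rintro _ ⟨γ, rfl, hγ⟩
  obtain ⟨a, b, hab, hb, ha, hb'⟩ := γ.exists_isHeavy_prefix_suffix hγ l
  have hprefix := γ.min_hanoiGamma_le_of_isHeavy (by omega) (hab.trans hb) ha
  have hsuffix := γ.min_hanoiGamma_le_of_isHeavy (by omega) le_rfl hb'
  omega

/-- For `p ≥ 4`, `N ≥ 2` and `1 ≤ ℓ ≤ N−1`,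
`Γ(p, N) ≥ 2·min{Γ(p, N−ℓ), Γ(p−1, ℓ)}`. -/
theorem gamma_recursive (p N l : ℕ) (hp : 4 ≤ p) (hN : 2 ≤ N)
    (hl : 1 ≤ l) (hl' : l ≤ N - 1) :
    HanoiGamma p N ≥ 2 * min (HanoiGamma p (N - l)) (HanoiGamma (p - 1) l) :=
  gamma_recursive_general p N l hp
end
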